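/- For the CPS translation of union-intersection types defined by α* = α, (S→T)* = S* → ⟦T⟧, (⋂R)* = ⋂R*, (⋃S)⁺ = ⋂¬S*, ⟦T⟧ = ¬T⁺, the following monotonicity holds: if T₀ ≤ T₁ in the source subtype relation, then ⟦T₀⟧ ≤ ⟦T₁⟧ in the target subtype relation; moreover T₀ ≤ T₁ implies T₁⁺ ≤ T₀⁺, and S₀ ≤ S₁ implies S₀* ≤ S₁*. -/

import Mathlib

/-! ## Union-intersection types -/

mutual
/-- Raw types `R ::= α | S → T`. -/
inductive RawTy : Type
  | atom : ℕ → RawTy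
  | arrow : STy → TTy → RawTy
/-- Subsidiary types: finite formal intersections of raw types
    (the empty intersection is ω). -/
inductive STy : Type
  | inter : List RawTy → STy
/-- Types: finite formal unions of subsidiary types
    (the empty union is Ʊ). -/
inductive TTy : Type
  | union : List STy → TTy
end

/-- A subsidiary type regarded as a type (a singleton union). -/
def STy.toT (S : STy) : TTy := .union [S]
/-- A raw type regarded as a subsidiary type (a singleton intersection). -/
def RawTy.toS (R : RawTy) : STy := .inter [R]

/-- ω, the empty intersection. -/
def STy.omega : STy := .inter []
/-- Ʊ, the empty union. -/
def TTy.agemo : TTy := .union []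

mutual
/-- The subtype relation on raw types. -/
inductive SubR : RawTy → RawTy → Prop
  | atom (a : ℕ) : SubR (.atom a) (.atom a)
  | arrow {S S' T T'} : SubS S' S → SubT T T' → SubR (.arrow S T) (.arrow S' T')
/-- The subtype relation on subsidiary types.  Intersections are taken up to
    associativity and commutativity; `weaken` is the projection rule
    `S ≤ S' ⟹ S ∩ S'' ≤ S'` and `pair` the pairing rule. -/
inductive SubS : STy → STy → Prop
  | ofRaw {R R'} : SubR R R' → SubS (.inter [R]) (.inter [R'])
  | weaken {l l' : List RawTy} {S'} : SubS (.inter l) S' → l.Subperm l' →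
      SubS (.inter l') S'
  | pair {S} {l' : List RawTy} : (∀ R' ∈ l', SubS S (.inter [R'])) →
      SubS S (.inter l')
/-- The subtype relation on types.  `widen` is the injection rule
    `T ≤ T' ⟹ T ≤ T'' ∪ T'` and `copair` the copairing rule. -/
inductive SubT : TTy → TTy → Prop
  | ofS {S S'} : SubS S S' → SubT (.union [S]) (.union [S'])
  | widen {T} {l l' : List STy} : SubT T (.union l) → l.Subperm l' →
      SubT T (.union l')
  | copair {l : List STy} {T} : (∀ S ∈ l, SubT (.union [S]) T) →
      SubT (.union l) T
end

/-! ## Target strict types: σ ::= α | σ̲ → τ, κ ::= ¬σ̲, τ ::= ¬κ̲ -/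

mutual
/-- Strict types σ of the target calculus: `arrow s t` is σ̲ → τ where σ̲ = ⋂σ. -/
inductive Sig : Type
  | atom : ℕ → Sig
  | arrow : List Sig → Tau → Sig
/-- Strict types τ = ¬κ̲ of the target calculus, where κ̲ = ⋂κ and each κ = ¬σ̲
    is represented by its underlying intersection σ̲ (a list of σ's). -/
inductive Tau : Type
  | neg : List (List Sig) → Tau
end

/-- A continuation type κ = ¬σ̲ is represented by the list σ̲. -/
abbrev Kap := List Sig
/-- An intersection σ̲ = ⋂σ. -/
abbrev SigU := List Sig
/-- An intersection κ̲ = ⋂κ. -/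
abbrev KapU := List Kap

mutual
/-- Target subtyping on strict types σ. -/
inductive SubSig : Sig → Sig → Prop
  | atom (a : ℕ) : SubSig (.atom a) (.atom a)
  | arrow {s s' : SigU} {t t' : Tau} :
      SubSigU s' s → SubTau t t' → SubSig (.arrow s t) (.arrow s' t')
/-- Target subtyping on intersections σ̲ (projection/pairing, up to
    associativity and commutativity). -/
inductive SubSigU : SigU → SigU → Prop
  | intro {l l' : SigU} (f : Fin l'.length → Fin l.length)
      (h : ∀ j : Fin l'.length, SubSig (l.get (f j)) (l'.get j)) :
      SubSigU l l'
/-- Target subtyping on continuation types κ = ¬σ̲ (contravariant in σ̲). -/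
inductive SubKap : Kap → Kap → Prop
  | neg {s s' : SigU} : SubSigU s' s → SubKap s s'
/-- Target subtyping on intersections κ̲. -/
inductive SubKapU : KapU → KapU → Prop
  | intro {l l' : KapU} (f : Fin l'.length → Fin l.length)
      (h : ∀ j : Fin l'.length, SubKap (l.get (f j)) (l'.get j)) :
      SubKapU l l'
/-- Target subtyping on strict types τ = ¬κ̲ (contravariant in κ̲). -/
inductive SubTau : Tau → Tau → Prop
  | neg {k k' : KapU} : SubKapU k' k → SubTau (.neg k) (.neg k')
end

/-! ## The CPS translation of types -/

mutual
/-- R* of a raw type. -/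
def starR : RawTy → Sig
  | .atom a => .atom a
  | .arrow S T => .arrow (starS S) (cpsT T)
/-- S* = ⋂R* of a subsidiary type. -/
def starS : STy → SigU
  | .inter l => starRList l
def starRList : List RawTy → SigU
  | [] => []
  | R :: l => starR R :: starRList l
/-- T⁺ = ⋂¬S* of a type ⋃S (each ¬S* is the κ represented by S*). -/
def plusT : TTy → KapU
  | .union l => plusSList l
def plusSList : List STy → KapU
  | [] => []
  | S :: l => starS S :: plusSList l
/-- ⟦T⟧ = ¬T⁺. -/
def cpsT : TTy → Tau
  | T => .neg (plusT T)
end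
/-! Induction on source subtyping derivations, simultaneously for raw, subsidiary and full
types. Both target intersection orders say that every conjunct on the right is dominated by
a conjunct on the left, so the projection and pairing rules for `S` carry over to `S*`.
Since `T⁺` is the intersection of the continuation types `¬S*` over the members `S` of `T`,
the injection and copairing rules for unions become projection and pairing for `T⁺`, with the
direction reversed by the contravariance of `¬`. -/

theorem exists_reindex_iff_forall_mem_exists_mem {α β : Type*} (r : α → β → Prop)
    (l : List α) (l' : List β) :
    (∃ f : Fin l'.length → Fin l.length, ∀ j, r (l.get (f j)) (l'.get j)) ↔
      ∀ b ∈ l', ∃ a ∈ l, r a b := by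
  constructor
  · rintro ⟨f, hf⟩ b hb
    obtain ⟨j, rfl⟩ := List.get_of_mem hb
    exact ⟨_, List.get_mem _ _, hf j⟩
  · intro h
    choose g hg using fun j => h _ (List.get_mem l' j)
    choose f hf using fun j => List.get_of_mem (hg j).1
    exact ⟨f, fun j => hf j ▸ (hg j).2⟩

theorem subSigU_iff {l l' : SigU} : SubSigU l l' ↔ ∀ s' ∈ l', ∃ s ∈ l, SubSig s s' := by
  rw [← exists_reindex_iff_forall_mem_exists_mem]
  exact ⟨fun ⟨f, h⟩ => ⟨f, h⟩, fun ⟨f, h⟩ => ⟨f, h⟩⟩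

theorem subKapU_iff {l l' : KapU} : SubKapU l l' ↔ ∀ k' ∈ l', ∃ k ∈ l, SubKap k k' := by
  rw [← exists_reindex_iff_forall_mem_exists_mem]
  exact ⟨fun ⟨f, h⟩ => ⟨f, h⟩, fun ⟨f, h⟩ => ⟨f, h⟩⟩

theorem SubSigU.mono_left {l m l' : SigU} (h : SubSigU l l') (hlm : l ⊆ m) : SubSigU m l' :=
  subSigU_iff.2 fun s' hs' =>
    let ⟨s, hs, hss'⟩ := subSigU_iff.1 h s' hs'
    ⟨s, hlm hs, hss'⟩

theorem SubKapU.mono_left {l m l' : KapU} (h : SubKapU l l') (hlm : l ⊆ m) : SubKapU m l' :=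
  subKapU_iff.2 fun k' hk' =>
    let ⟨k, hk, hkk'⟩ := subKapU_iff.1 h k' hk'
    ⟨k, hlm hk, hkk'⟩

@[simp] theorem starRList_eq_map (l : List RawTy) : starRList l = l.map starR := by
  induction l with
  | nil => simp [starRList]
  | cons R l ih => simp [starRList, ih]

@[simp] theorem plusSList_eq_map (l : List STy) : plusSList l = l.map starS := by
  induction l with
  | nil => simp [plusSList]
  | cons S l ih => simp [plusSList, ih]

@[simp] theorem starS_inter (l : List RawTy) : starS (.inter l) = l.map starR := by
  simp [starS]

@[simp] theorem plusT_union (l : List STy) : plusT (.union l) = l.map starS := by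
  simp [plusT]

theorem cpsT_eq_neg_plusT (T : TTy) : cpsT T = .neg (plusT T) := by
  simp [cpsT]

mutual
theorem starR_mono {R R' : RawTy} : SubR R R' → SubSig (starR R) (starR R')
  | .atom a => by simpa [starR] using SubSig.atom a
  | .arrow hS hT => by
    simpa [starR, cpsT_eq_neg_plusT] using SubSig.arrow (starS_mono hS) (.neg (plusT_anti hT))

theorem starS_mono {S S' : STy} : SubS S S' → SubSigU (starS S) (starS S')
  | .ofRaw hR => subSigU_iff.2 <| by simpa using starR_mono hR
  | .weaken h hl => by
    simpa using (starS_mono h).mono_left (by simpa using List.map_subset starR hl.subset)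
  | .pair h => subSigU_iff.2 <| by simpa using fun R' hR' => subSigU_iff.1 (starS_mono (h R' hR'))

theorem plusT_anti {T T' : TTy} : SubT T T' → SubKapU (plusT T') (plusT T)
  | .ofS h => subKapU_iff.2 <| by simpa using SubKap.neg (starS_mono h)
  | .widen h hl => by
    simpa using (plusT_anti h).mono_left (by simpa using List.map_subset starS hl.subset)
  | .copair h => subKapU_iff.2 <| by simpa using fun S hS => subKapU_iff.1 (plusT_anti (h S hS))
end

theorem cpsT_mono {T T' : TTy} (h : SubT T T') : SubTau (cpsT T) (cpsT T') := by
  simpa only [cpsT_eq_neg_plusT] using SubTau.neg (plusT_anti h)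

/-- Monotonicity of the CPS translation of types:
T₀ ≤ T₁ implies ⟦T₀⟧ ≤ ⟦T₁⟧ and T₁⁺ ≤ T₀⁺; S₀ ≤ S₁ implies S₀* ≤ S₁*. -/
theorem cps_type_monotone :
    (∀ T₀ T₁ : TTy, SubT T₀ T₁ → SubTau (cpsT T₀) (cpsT T₁)) ∧
    (∀ T₀ T₁ : TTy, SubT T₀ T₁ → SubKapU (plusT T₁) (plusT T₀)) ∧
    (∀ S₀ S₁ : STy, SubS S₀ S₁ → SubSigU (starS S₀) (starS S₁)) :=
  ⟨fun _ _ => cpsT_mono, fun _ _ => plusT_anti, fun _ _ => starS_mono⟩
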